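/- Let f : U → V be a map in the set-up. Then for every x ∈ K_f and every n ≥ 0, the closure of P_{n+1}(x) is contained in P_n(x), and the intersection ⋂_{n≥0} P_n(x) equals K_f(x), the connected component of K_f containing x. -/
import Mathlib


open Set Function Topology

noncomputable section

/-- A (bounded) Jordan domain in the plane: a bounded connected open set whose
frontier is a Jordan curve, i.e. an injective continuous image of the circle. -/
def IsJordanDomain (Ω : Set ℂ) : Prop :=
  IsOpen Ω ∧ IsConnected Ω ∧ Bornology.IsBounded Ω ∧
  ∃ g : Metric.sphere (0:ℂ) 1 → ℂ, Continuous g ∧ Function.Injective g ∧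
    Set.range g = frontier Ω

/-- `A` is strictly contained in `X`: it is a proper subset of some connected
component of `X`. -/
def StrictlyContainedIn (A X : Set ℂ) : Prop :=
  ∃ x ∈ X, A ⊂ connectedComponentIn X x

/-- The set-up: `V ⊆ ℂ` is open with finitely many components, each a bounded Jordan
domain, with pairwise disjoint closures; `U` is open with closure contained in `V`,
with finitely many components with pairwise disjoint closures; `f : U → V` is proper
holomorphic; every critical point of `f` lies in `K_f`. -/
structure Setup where
  U : Set ℂ
  V : Set ℂ
  f : ℂ → ℂ
  hV_open : IsOpen V
  hV_comp_finite : {C : Set ℂ | ∃ x ∈ V, C = connectedComponentIn V x}.Finite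
  hV_jordan : ∀ x ∈ V, IsJordanDomain (connectedComponentIn V x)
  hV_disj : ∀ x ∈ V, ∀ y ∈ V, connectedComponentIn V x ≠ connectedComponentIn V y →
    closure (connectedComponentIn V x) ∩ closure (connectedComponentIn V y) = ∅
  hU_open : IsOpen U
  hUV : closure U ⊆ V
  hU_comp_finite : {C : Set ℂ | ∃ x ∈ U, C = connectedComponentIn U x}.Finite
  hU_disj : ∀ x ∈ U, ∀ y ∈ U, connectedComponentIn U x ≠ connectedComponentIn U y →
    closure (connectedComponentIn U x) ∩ closure (connectedComponentIn U y) = ∅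
  hf_maps : Set.MapsTo f U V
  hf_holo : DifferentiableOn ℂ f U
  hf_proper : ∀ K ⊆ V, IsCompact K → IsCompact (U ∩ f ⁻¹' K)
  hf_crit : ∀ z ∈ U, deriv f z = 0 → ∀ n : ℕ, f^[n] z ∈ U

namespace Setup

variable (S : Setup)

/-- `K_f = {z ∈ U : f^n(z) ∈ U for all n}`. -/
def K : Set ℂ := {z | z ∈ S.U ∧ ∀ n : ℕ, S.f^[n] z ∈ S.U}

/-- The set of critical points of `f`. -/
def Crit : Set ℂ := {z | z ∈ S.U ∧ deriv S.f z = 0}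

/-- `preV n = f^{-n}(V)`, preimages being taken for the partial map `f : U → V`. -/
def preV : ℕ → Set ℂ
  | 0 => S.V
  | n+1 => S.U ∩ S.f ⁻¹' (preV n)

/-- `P` is a puzzle piece of depth `n`: a connected component of `f^{-n}(V)`. -/
def IsPieceOfDepth (n : ℕ) (P : Set ℂ) : Prop :=
  ∃ x ∈ S.preV n, P = connectedComponentIn (S.preV n) x

/-- `P` is a puzzle piece. -/
def IsPiece (P : Set ℂ) : Prop := ∃ n, S.IsPieceOfDepth n P

/-- `piece n x = P_n(x)`, the puzzle piece of depth `n` containing `x`. -/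
def piece (n : ℕ) (x : ℂ) : Set ℂ := connectedComponentIn (S.preV n) x

/-- `X` is a finite union of puzzle pieces. -/
def IsPieceUnion (X : Set ℂ) : Prop :=
  ∃ P : Set (Set ℂ), P.Finite ∧ (∀ Q ∈ P, S.IsPiece Q) ∧ X = ⋃₀ P

/-- `X` is nice: for every connected component `P` of `X` and every `n ≥ 1`,
`f^n(P)` is not strictly contained in `X`. -/
def Nice (X : Set ℂ) : Prop :=
  ∀ x ∈ X, ∀ n : ℕ, 1 ≤ n →
    ¬ StrictlyContainedIn (S.f^[n] '' connectedComponentIn X x) X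

/-- `preIm X n = f^{-n}(X)`, preimages being taken for the partial map `f : U → V`. -/
def preIm (X : Set ℂ) : ℕ → Set ℂ
  | 0 => X
  | n+1 => S.U ∩ S.f ⁻¹' (preIm X n)

/-- `D(X) = ⋃_{k ≥ 0} f^{-k}(X)`. -/
def D (X : Set ℂ) : Set ℂ := ⋃ k, S.preIm X k

/-- For `z ∈ D(X) ∖ X`, `k` is the landing time `k(z)`: the minimal positive
integer with `f^k(z) ∈ X`. -/
def IsLandingTime (X : Set ℂ) (z : ℂ) (k : ℕ) : Prop :=
  1 ≤ k ∧ S.f^[k] z ∈ X ∧ ∀ j, 1 ≤ j → j < k → S.f^[j] z ∉ X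

/-- `landComp X z k = Comp_z(f^{-k}(Comp_{f^k(z)}(X)))`; for `k = k(z)` this is
`L_z(X)`. -/
def landComp (X : Set ℂ) (z : ℂ) (k : ℕ) : Set ℂ :=
  connectedComponentIn (S.preIm (connectedComponentIn X (S.f^[k] z)) k) z

/-- `x` combinatorially accumulates to `y`: for every `n ≥ 0` there is `j ≥ 1`
with `f^j(x) ∈ P_n(y)`. -/
def Acc (x y : ℂ) : Prop := ∀ n : ℕ, ∃ j : ℕ, 1 ≤ j ∧ S.f^[j] x ∈ S.piece n y

/-- `Forw(x) = {y ∈ K_f : x → y}`. -/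
def Forw (x : ℂ) : Set ℂ := {y | y ∈ S.K ∧ S.Acc x y}

/-- The equivalence `c1 ∼ c2` on critical points. -/
def Equiv (c1 c2 : ℂ) : Prop := c1 = c2 ∨ (S.Acc c1 c2 ∧ S.Acc c2 c1)

/-- The class `[c]` of a critical point `c`. -/
def cls (c : ℂ) : Set ℂ := {c' | c' ∈ S.Crit ∧ S.Equiv c c'}

/-- `D(f) = Crit(f)/∼`, the set of equivalence classes. -/
def classes : Set (Set ℂ) := {A | ∃ c ∈ S.Crit, A = S.cls c}

/-- `[c1] → [c2]`. -/
def ClassAcc (A B : Set ℂ) : Prop := ∃ c1 ∈ A, ∃ c2 ∈ B, S.Acc c1 c2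

/-- The partial order on classes: `A ≤ B` iff `A = B` or `B → A`. -/
def ClassLe (A B : Set ℂ) : Prop := A = B ∨ S.ClassAcc B A

/-- The minimal elements of a family of classes w.r.t. `ClassLe`. -/
def minimalsIn (T : Set (Set ℂ)) : Set (Set ℂ) :=
  {A | A ∈ T ∧ ∀ B ∈ T, S.ClassLe B A → B = A}

/-- Auxiliary: `(D_k(f), D_0(f) ∪ ⋯ ∪ D_k(f))`. -/
def DlevelAux : ℕ → Set (Set ℂ) × Set (Set ℂ)
  | 0 => (S.minimalsIn S.classes, S.minimalsIn S.classes)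
  | k+1 =>
      (S.minimalsIn (S.classes \ (DlevelAux k).2),
        (DlevelAux k).2 ∪ S.minimalsIn (S.classes \ (DlevelAux k).2))

/-- `Dlevel k = D_k(f)`. -/
def Dlevel (k : ℕ) : Set (Set ℂ) := (S.DlevelAux k).1

/-- Each connected component of `V` contains at most one critical point. -/
def OneCritPerComp : Prop :=
  ∀ c ∈ S.Crit, ∀ c' ∈ S.Crit,
    connectedComponentIn S.V c = connectedComponentIn S.V c' → c = c'

/-- Assumption (∗∗): if `c` does not combinatorially accumulate to `c'`, then
`f^j(c) ∉ P_0(c')` for all `j ≥ 1`. -/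
def StarStar : Prop :=
  ∀ c ∈ S.Crit, ∀ c' ∈ S.Crit, ¬ S.Acc c c' →
    ∀ j : ℕ, 1 ≤ j → S.f^[j] c ∉ S.piece 0 c'

/-- `K_f(x)`, the connected component of `K_f` containing `x`. -/
def Kcomp (x : ℂ) : Set ℂ := connectedComponentIn S.K x

/-- `P_{n+k}(c1)` is a child of `P_n(c2)`: `f^k(P_{n+k}(c1)) = P_n(c2)` and
`f^{k-1}` maps `P_{n+k-1}(f(c1))` conformally onto `P_n(c2)`. -/
def IsChild (c1 : ℂ) (k : ℕ) (n : ℕ) (c2 : ℂ) : Prop :=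
  1 ≤ k ∧ S.f^[k] '' S.piece (n+k) c1 = S.piece n c2 ∧
  Set.InjOn (S.f^[k-1]) (S.piece (n+k-1) (S.f c1)) ∧
  S.f^[k-1] '' S.piece (n+k-1) (S.f c1) = S.piece n c2

/-- `c` is persistently recurrent: for every `n ≥ 0` and every `c' ∈ [c]`,
`P_n(c')` has only finitely many children. -/
def PersistentlyRecurrent (c : ℂ) : Prop :=
  ∀ n : ℕ, ∀ c' ∈ S.cls c,
    {Q : Set ℂ | ∃ c1 ∈ S.cls c, ∃ k : ℕ, S.IsChild c1 k n c' ∧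
      Q = S.piece (n+k) c1}.Finite

/-- `Crit_n(f)`. -/
def CritN : Set ℂ := {c | c ∈ S.Crit ∧ ∀ c' ∈ S.Crit, ¬ S.Acc c c'}

/-- `Crit_e(f)`. -/
def CritE : Set ℂ := {c | c ∈ S.Crit ∧ ¬ S.Acc c c ∧ ∃ c' ∈ S.Crit, S.Acc c c'}

/-- `Crit_r(f)`. -/
def CritR : Set ℂ := {c | c ∈ S.Crit ∧ S.Acc c c ∧ ¬ S.PersistentlyRecurrent c}

/-- `Crit_p(f)`. -/
def CritP : Set ℂ := {c | c ∈ S.Crit ∧ S.Acc c c ∧ S.PersistentlyRecurrent c}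

end Setup



lemma isPreconnected_iInter_of_antitone {K : ℕ → Set ℂ} (hc : ∀ n, IsCompact (K n))
    (hconn : ∀ n, IsPreconnected (K n)) (hmono : Antitone K) :
    IsPreconnected (⋂ n, K n) := by
  set A := ⋂ n, K n with hA
  intro u v hu hv hsub hne1 hne2
  by_contra hcon
  rw [not_nonempty_iff_eq_empty] at hcon
  have hAclosed : IsClosed A := isClosed_iInter fun n => (hc n).isClosed
  have hAcomp : IsCompact A := (hc 0).of_isClosed_subset hAclosed (iInter_subset _ 0)
  have hBu : A ∩ u = A \ v := by
    apply Subset.antisymm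
    · rintro z ⟨hz, hzu⟩
      refine ⟨hz, fun hzv => ?_⟩
      exact (eq_empty_iff_forall_notMem.1 hcon z) ⟨hz, hzu, hzv⟩
    · rintro z ⟨hz, hzv⟩
      rcases hsub hz with h | h
      · exact ⟨hz, h⟩
      · exact absurd h hzv
  have hCv : A ∩ v = A \ u := by
    apply Subset.antisymm
    · rintro z ⟨hz, hzv⟩
      refine ⟨hz, fun hzu => ?_⟩
      exact (eq_empty_iff_forall_notMem.1 hcon z) ⟨hz, hzu, hzv⟩
    · rintro z ⟨hz, hzu⟩
      rcases hsub hz with h | h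
      · exact absurd h hzu
      · exact ⟨hz, h⟩
  have hBcomp : IsCompact (A ∩ u) := by
    rw [hBu]; exact hAcomp.diff hv
  have hCcomp : IsCompact (A ∩ v) := by
    rw [hCv]; exact hAcomp.diff hu
  have hdisj : Disjoint (A ∩ u) (A ∩ v) := by
    rw [disjoint_iff_inter_eq_empty]
    rw [← hcon]; ext z; simp; tauto
  obtain ⟨u', v', hu', hv', hBu', hCv', hdisj'⟩ :=
    SeparatedNhds.of_isCompact_isCompact hBcomp hCcomp hdisj
  have hAsub : A ⊆ u' ∪ v' := by
    intro z hz
    rcases hsub hz with h | h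
    · exact Or.inl (hBu' ⟨hz, h⟩)
    · exact Or.inr (hCv' ⟨hz, h⟩)
  -- find n with K n ⊆ u' ∪ v'
  have : ∃ n, K n \ (u' ∪ v') = ∅ := by
    by_contra hne
    push_neg at hne
    have := IsCompact.nonempty_iInter_of_directed_nonempty_isCompact_isClosed
      (fun n => K n \ (u' ∪ v'))
      (fun m n => ⟨max m n, diff_subset_diff_left (hmono (le_max_left m n)),
        diff_subset_diff_left (hmono (le_max_right m n))⟩)
      (fun n => hne n)
      (fun n => (hc n).diff (hu'.union hv'))
      (fun n => (hc n).isClosed.sdiff (hu'.union hv'))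
    obtain ⟨z, hz⟩ := this
    simp only [mem_iInter, mem_diff] at hz
    have hzA : z ∈ A := mem_iInter.2 fun n => (hz n).1
    exact (hz 0).2 (hAsub hzA)
  obtain ⟨n, hn⟩ := this
  have hKn : K n ⊆ u' ∪ v' := by
    rw [diff_eq_empty] at hn; exact hn
  have h1 : (K n ∩ u').Nonempty := by
    obtain ⟨z, hz⟩ := hne1
    exact ⟨z, iInter_subset _ n hz.1, hBu' hz⟩
  have h2 : (K n ∩ v').Nonempty := by
    obtain ⟨z, hz⟩ := hne2
    exact ⟨z, iInter_subset _ n hz.1, hCv' hz⟩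
  obtain ⟨z, -, hz⟩ := hconn n u' v' hu' hv' hKn h1 h2
  exact (hdisj'.ne_of_mem hz.1 hz.2) rfl

namespace Setup

variable (S : Setup)

lemma U_subset_V : S.U ⊆ S.V := fun _ hz => S.hUV (subset_closure hz)

lemma V_bounded : Bornology.IsBounded S.V := by
  have hsub : S.V ⊆ ⋃₀ {C : Set ℂ | ∃ x ∈ S.V, C = connectedComponentIn S.V x} := fun z hz =>
    ⟨connectedComponentIn S.V z, ⟨z, hz, rfl⟩, mem_connectedComponentIn hz⟩
  refine Bornology.IsBounded.subset ?_ hsub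
  refine (Bornology.isBounded_sUnion S.hV_comp_finite).2 ?_
  rintro C ⟨x, hx, rfl⟩
  exact (S.hV_jordan x hx).2.2.1

lemma preV_open : ∀ n, IsOpen (S.preV n)
  | 0 => S.hV_open
  | n+1 => S.hf_holo.continuousOn.isOpen_inter_preimage S.hU_open (preV_open n)

lemma preV_subset_V : ∀ n, S.preV n ⊆ S.V
  | 0 => subset_rfl
  | _+1 => fun _ hz => S.U_subset_V hz.1

lemma K_mapsTo {z : ℂ} (hz : z ∈ S.K) : S.f z ∈ S.K := by
  refine ⟨by simpa using hz.2 1, fun k => ?_⟩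
  rw [← Function.iterate_succ_apply]
  exact hz.2 (k+1)

lemma K_subset_preV : ∀ n, S.K ⊆ S.preV n
  | 0 => fun _ hz => S.U_subset_V hz.1
  | n+1 => fun z hz => ⟨hz.1, K_subset_preV n (S.K_mapsTo hz)⟩

lemma iterate_mem_U : ∀ n, ∀ z ∈ S.preV (n+1), ∀ k ≤ n, S.f^[k] z ∈ S.U
  | 0, z, hz, k, hk => by
    obtain rfl : k = 0 := Nat.le_zero.1 hk
    exact hz.1
  | n+1, z, hz, 0, _ => hz.1
  | n+1, z, hz, k+1, hk => by
    rw [Function.iterate_succ_apply]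
    exact iterate_mem_U n (S.f z) hz.2 k (Nat.succ_le_succ_iff.1 hk)

lemma iInter_preV_subset_K : (⋂ n, S.preV n) ⊆ S.K := by
  intro z hz
  simp only [mem_iInter] at hz
  exact ⟨(hz 1).1, fun k => S.iterate_mem_U k z (hz (k+1)) k le_rfl⟩

lemma closure_preV : ∀ n, closure (S.preV (n+1)) ⊆ S.preV n
  | 0 => (closure_mono (fun z (hz : z ∈ S.preV 1) => hz.1)).trans S.hUV
  | n+1 => by
    set Kc := closure (S.preV (n+1)) with hKc
    have hKc_sub : Kc ⊆ S.V := (closure_preV n).trans (S.preV_subset_V n)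
    have hKc_comp : IsCompact Kc :=
      Metric.isCompact_of_isClosed_isBounded isClosed_closure
        ((S.preV_subset_V (n+1)).trans subset_rfl |> fun h =>
          (S.V_bounded.subset h).closure)
    have hcpt : IsCompact (S.U ∩ S.f ⁻¹' Kc) := S.hf_proper Kc hKc_sub hKc_comp
    have hsub : S.preV (n+2) ⊆ S.U ∩ S.f ⁻¹' Kc := fun z hz => ⟨hz.1, subset_closure hz.2⟩
    have hcl : closure (S.preV (n+2)) ⊆ S.U ∩ S.f ⁻¹' Kc :=
      closure_minimal hsub hcpt.isClosed
    intro z hz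
    exact ⟨(hcl hz).1, closure_preV n (hcl hz).2⟩

lemma closure_piece {x : ℂ} (hx : x ∈ S.K) (n : ℕ) :
    closure (S.piece (n+1) x) ⊆ S.piece n x := by
  have hx1 : x ∈ S.preV (n+1) := S.K_subset_preV (n+1) hx
  have hconn : IsPreconnected (closure (S.piece (n+1) x)) :=
    isPreconnected_connectedComponentIn.closure
  have hmem : x ∈ closure (S.piece (n+1) x) := subset_closure (mem_connectedComponentIn hx1)
  have hsub : closure (S.piece (n+1) x) ⊆ S.preV n :=
    (closure_mono (connectedComponentIn_subset _ _)).trans (S.closure_preV n)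
  exact hconn.subset_connectedComponentIn hmem hsub

end Setup

/-- For a map in the set-up, for every `x ∈ K_f` and every `n ≥ 0`,
`closure (P_{n+1}(x)) ⊆ P_n(x)`, and `⋂_{n ≥ 0} P_n(x) = K_f(x)`. -/
theorem stmt_5 (S : Setup) (x : ℂ) (hx : x ∈ S.K) :
    (∀ n : ℕ, closure (S.piece (n+1) x) ⊆ S.piece n x) ∧
      (⋂ n : ℕ, S.piece n x) = connectedComponentIn S.K x := by
  constructor
  · exact fun n => S.closure_piece hx n
  · have hxn : ∀ n, x ∈ S.preV n := fun n => S.K_subset_preV n hx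
    have hcl_compact : ∀ n, IsCompact (closure (S.piece n x)) := fun n =>
      Metric.isCompact_of_isClosed_isBounded isClosed_closure
        ((S.V_bounded.subset ((connectedComponentIn_subset _ _).trans
          (S.preV_subset_V n))).closure)
    have hcl_conn : ∀ n, IsPreconnected (closure (S.piece n x)) := fun n =>
      isPreconnected_connectedComponentIn.closure
    have hcl_anti : Antitone fun n => closure (S.piece n x) := by
      apply antitone_nat_of_succ_le
      intro n
      exact (S.closure_piece hx n).trans subset_closure
    have hAeq : (⋂ n, S.piece n x) = ⋂ n, closure (S.piece n x) := by
      apply Subset.antisymm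
      · exact iInter_mono fun n => subset_closure
      · intro z hz
        simp only [mem_iInter] at hz ⊢
        exact fun n => S.closure_piece hx n (hz (n+1))
    have hAconn : IsPreconnected (⋂ n, S.piece n x) := by
      rw [hAeq]
      exact isPreconnected_iInter_of_antitone hcl_compact hcl_conn hcl_anti
    have hAK : (⋂ n, S.piece n x) ⊆ S.K := by
      intro z hz
      apply S.iInter_preV_subset_K
      simp only [mem_iInter] at hz ⊢
      exact fun n => connectedComponentIn_subset _ _ (hz n)
    have hxA : x ∈ ⋂ n, S.piece n x :=
      mem_iInter.2 fun n => mem_connectedComponentIn (hxn n)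
    apply Subset.antisymm
    · exact hAconn.subset_connectedComponentIn hxA hAK
    · apply subset_iInter
      intro n
      exact isPreconnected_connectedComponentIn.subset_connectedComponentIn
        (mem_connectedComponentIn hx) ((connectedComponentIn_subset _ _).trans
          (S.K_subset_preV n))
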